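/- arXiv:2212.01149 — 5 statements merged into one kernel-verified Lean document; each statement's English description precedes it below -/
import Mathlib

section
/- The event B_∞ that the causet has infinitely many breaks belongs to the σ-algebra R(S) generated by the stem-sets (and hence so does its complement B_∞^c). -/
open MeasurableSpace MeasureTheory Set

/-- An (infinite) causal set: an irreflexive, transitive relation on ℕ
satisfying the natural-labeling condition `x ≺ y → x < y`.  The type of all
such causets plays the role of Ω. -/
structure Causet where
  rel : ℕ → ℕ → Prop
  irrefl : ∀ x, ¬ rel x x
  trans : ∀ x y z, rel x y → rel y z → rel x z
  lt_of_rel : ∀ x y, rel x y → x < y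

/-- A finite causet on ground-set `{0, …, n-1}` with natural labeling. -/
structure FinCauset (n : ℕ) where
  rel : ℕ → ℕ → Prop
  bounded : ∀ x y, rel x y → x < n ∧ y < n
  irrefl : ∀ x, ¬ rel x x
  trans : ∀ x y z, rel x y → rel y z → rel x z
  lt_of_rel : ∀ x y, rel x y → x < y

/-- The cylinder set of a finite causet `C` on `{0,…,n-1}`: all causets whose
restriction to `{0,…,n-1}` equals `C`. -/
def cyl {n : ℕ} (C : FinCauset n) : Set Causet :=
  { D | ∀ x y, x < n → y < n → (D.rel x y ↔ C.rel x y) }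

/-- The σ-algebra 𝔐 generated by all cylinder sets. -/
def cylAlgebra : MeasurableSpace Causet :=
  .generateFrom { E | ∃ n, 0 < n ∧ ∃ C : FinCauset n, E = cyl C }

/-- Order isomorphism between two (infinite) causets. -/
def Iso (C D : Causet) : Prop :=
  ∃ f : ℕ ≃ ℕ, ∀ x y, C.rel x y ↔ D.rel (f x) (f y)

/-- A set of causets is covariant if it is closed under order isomorphism. -/
def CovariantEvent (E : Set Causet) : Prop :=
  ∀ C D : Causet, Iso C D → C ∈ E → D ∈ E

/-- Membership in the σ-algebra R of covariant events: measurable w.r.t. 𝔐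
and closed under order isomorphism. -/
def MemR (E : Set Causet) : Prop :=
  MeasurableSet[cylAlgebra] E ∧ CovariantEvent E

/-- A stem of a causet: a finite down-set. -/
def IsStem (D : Causet) (A : Set ℕ) : Prop :=
  A.Finite ∧ ∀ x y, y ∈ A → D.rel x y → x ∈ A

/-- The stem-set of (the order of) the finite causet `C`: all causets
containing a stem order-isomorphic to `C`. -/
def stemSet {n : ℕ} (C : FinCauset n) : Set Causet :=
  { D | ∃ A : Set ℕ, IsStem D A ∧
      ∃ f : {x : ℕ // x < n} ≃ A,
        ∀ x y : {x : ℕ // x < n}, C.rel x.1 y.1 ↔ D.rel (f x).1 (f y).1 }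

/-- The collection S of all stem-sets. -/
def stemSets : Set (Set Causet) :=
  { E | ∃ n, 0 < n ∧ ∃ C : FinCauset n, E = stemSet C }

/-- The σ-algebra R(S) generated by the stem-sets. -/
def stemAlgebra : MeasurableSpace Causet := .generateFrom stemSets

/-- A rogue: a causet `U` for which there is a non-isomorphic causet `V`
belonging to exactly the same stem-sets. -/
def IsRogue (U : Causet) : Prop :=
  ∃ V : Causet, ¬ Iso U V ∧
    ∀ (n : ℕ) (C : FinCauset n), 0 < n → (V ∈ stemSet C ↔ U ∈ stemSet C)

/-- Θ: the set of rogues. -/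
def Theta : Set Causet := { U | IsRogue U }

/-- `A` is the past of a break of `D`: `(A, Aᶜ)` is a partition into nonempty
parts with every element of `A` below every element of `Aᶜ`. -/
def IsBreakPast (D : Causet) (A : Set ℕ) : Prop :=
  A.Nonempty ∧ Aᶜ.Nonempty ∧ ∀ a ∈ A, ∀ b ∈ Aᶜ, D.rel a b

/-- B_∞: the set of causets with infinitely many breaks. -/
def Binf : Set Causet := { D | { A : Set ℕ | IsBreakPast D A }.Infinite }

/-- `x` is a maximal element of the restriction of the finite causet `C`
to the elements `< k`. -/
def FMaximalBelow {n : ℕ} (C : FinCauset n) (k x : ℕ) : Prop :=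
  x < k ∧ ∀ y, y < k → ¬ C.rel x y

/-- A principal finite causet: it has a unique maximal element. -/
def Principal {n : ℕ} (C : FinCauset n) : Prop :=
  ∃! x, FMaximalBelow C n x

/-- 𝔐_b: the σ-algebra generated by the principal cylinder sets. -/
def principalCylAlgebra : MeasurableSpace Causet :=
  .generateFrom { E | ∃ n, ∃ C : FinCauset n, Principal C ∧ E = cyl C }

/-- Membership in R_b: covariant events containing all or none of the
causets with finitely many breaks. -/
def MemRb (E : Set Causet) : Prop :=
  MemR E ∧ (Binfᶜ ⊆ E ∨ Binfᶜ ⊆ Eᶜ)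

/-- `x` is a maximal element of the restriction of the causet `D` to `{0,…,n}`. -/
def RMaximal (D : Causet) (n x : ℕ) : Prop :=
  x ≤ n ∧ ∀ y, y ≤ n → ¬ D.rel x y

/-- 𝔉: causets all but finitely many of whose initial-segment restrictions
have at least two maximal elements. -/
def Ffin : Set Causet :=
  { D | ∃ m : ℕ, ∀ n, m < n →
      ∃ x y, x ≠ y ∧ RMaximal D n x ∧ RMaximal D n y }

/-- The restriction of the m-causet `D` to `{0,…,n-1}` equals the n-causet `C`. -/
def RestrEq {m n : ℕ} (D : FinCauset m) (C : FinCauset n) : Prop :=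
  ∀ x y, x < n → y < n → (D.rel x y ↔ C.rel x y)

/-- Γ_{C}: the causets containing `C` as a stem but containing no principal
causet of larger cardinality as a stem (i.e. `cyl C` minus the cylinder sets
of the principal causets extending `C`). -/
def Gamma {n : ℕ} (C : FinCauset n) : Set Causet :=
  cyl C \ { X | ∃ m, n < m ∧ ∃ D : FinCauset m, Principal D ∧ RestrEq D C ∧ X ∈ cyl D }

/-- Ŝ: the collection of principal stem-sets. -/
def principalStemSets : Set (Set Causet) :=
  { E | ∃ n, ∃ C : FinCauset n, Principal C ∧ E = stemSet C }

/-- R(Ŝ): the σ-algebra generated by the principal stem-sets. -/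
def principalStemAlgebra : MeasurableSpace Causet := .generateFrom principalStemSets

/-- `x` is a post of `D`: every other element is related to `x`. -/
def IsPost (D : Causet) (x : ℕ) : Prop :=
  ∀ y, y ≠ x → D.rel y x ∨ D.rel x y

/-- P_∞: the set of causets with infinitely many posts. -/
def Pinf : Set Causet := { D | { x | IsPost D x }.Infinite }

/-- A doubly principal finite causet: both it and its restriction to
`{0,…,n-2}` have a unique maximal element. -/
def DoublyPrincipal {n : ℕ} (C : FinCauset n) : Prop :=
  Principal C ∧ ∃! x, FMaximalBelow C (n - 1) x

/-- 𝔐_p: the σ-algebra generated by the doubly principal cylinder sets. -/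
def doublyPrincipalCylAlgebra : MeasurableSpace Causet :=
  .generateFrom { E | ∃ n, ∃ C : FinCauset n, DoublyPrincipal C ∧ E = cyl C }

/-- The σ-algebra generated by the doubly principal stem-sets. -/
def doublyPrincipalStemAlgebra : MeasurableSpace Causet :=
  .generateFrom { E | ∃ n, ∃ C : FinCauset n, DoublyPrincipal C ∧ E = stemSet C }

/-!
By natural labeling the past of a break is an initial segment `Iio m`, so a causet lies in `B_∞`
iff it has breaks at arbitrarily large labels `m`. A break at `m` is visible in the stems: `D` has
one iff every `n`-causet with `n > m` occurring as a stem of `D` has every label `< m` below every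
label `≥ m`, since natural labeling forces the isomorphism with the stem to match the labels `< m`
with the `m` elements of the past. This exhibits `B_∞` as a countable combination of stem-sets.
-/

/-- For `0 < m`, `(Iio m, Ici m)` is a break of `D`. -/
def Causet.BreakAt (D : Causet) (m : ℕ) : Prop :=
  ∀ a < m, ∀ b, m ≤ b → D.rel a b

def FinCauset.BreakAt {n : ℕ} (C : FinCauset n) (m : ℕ) : Prop :=
  ∀ a b, a < m → m ≤ b → b < n → C.rel a b

def Causet.restrict (D : Causet) (n : ℕ) : FinCauset n where
  rel x y := x < n ∧ y < n ∧ D.rel x y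
  bounded _ _ h := ⟨h.1, h.2.1⟩
  irrefl x h := D.irrefl x h.2.2
  trans x y z h₁ h₂ := ⟨h₁.1, h₂.2.1, D.trans x y z h₁.2.2 h₂.2.2⟩
  lt_of_rel x y h := D.lt_of_rel x y h.2.2

theorem FinCauset.rel_injective (n : ℕ) : Function.Injective (fun C : FinCauset n ↦ C.rel) := by
  rintro ⟨r₁, _, _, _, _⟩ ⟨r₂, _, _, _, _⟩ (rfl : r₁ = r₂)
  rfl

instance (n : ℕ) : Countable (FinCauset n) := by
  refine Function.Injective.countable
    (f := fun (C : FinCauset n) (p : Fin n × Fin n) ↦ C.rel p.1 p.2) fun C₁ C₂ h ↦ ?_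
  refine FinCauset.rel_injective n (funext₂ fun x y ↦ propext ?_)
  by_cases hxy : x < n ∧ y < n
  · exact iff_of_eq (congrFun h (⟨x, hxy.1⟩, ⟨y, hxy.2⟩))
  · exact iff_of_false (fun hr ↦ hxy (C₁.bounded x y hr)) (fun hr ↦ hxy (C₂.bounded x y hr))

theorem Nat.eq_Iio_ncard_of_isLowerSet {s : Set ℕ} (hs : IsLowerSet s) (hfin : s.Finite) :
    s = Iio s.ncard := by
  obtain rfl | ⟨a, rfl⟩ := hs.eq_univ_or_Iio
  · exact absurd hfin infinite_univ
  · rw [ncard_Iio_nat]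

namespace Causet

variable {D : Causet}

theorem isLowerSet_of_isBreakPast {A : Set ℕ} (hA : IsBreakPast D A) : IsLowerSet A := by
  intro x y hyx hx
  by_contra hy
  exact absurd (D.lt_of_rel x y (hA.2.2 x hx y hy)) (not_lt.2 hyx)

theorem isBreakPast_iff {A : Set ℕ} :
    IsBreakPast D A ↔ ∃ m, (0 < m ∧ D.BreakAt m) ∧ Iio m = A := by
  constructor
  · intro hA
    have hlower := isLowerSet_of_isBreakPast hA
    obtain ⟨⟨a, ha⟩, ⟨b, hb⟩, hrel⟩ := hA
    obtain rfl | ⟨m, rfl⟩ := hlower.eq_univ_or_Iio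
    · exact absurd (mem_univ b) hb
    · exact ⟨m, ⟨Nat.zero_lt_of_lt ha, fun a ha b hb ↦ hrel a ha b (not_lt.2 hb)⟩, rfl⟩
  · rintro ⟨m, ⟨hm, hbrk⟩, rfl⟩
    exact ⟨⟨0, hm⟩, ⟨m, lt_irrefl m⟩, fun a ha b hb ↦ hbrk a ha b (not_lt.1 hb)⟩

theorem mem_stemSet_restrict (D : Causet) (n : ℕ) : D ∈ stemSet (D.restrict n) := by
  refine ⟨Iio n, ⟨finite_Iio n, fun x y hy hxy ↦ (D.lt_of_rel x y hxy).trans hy⟩,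
    Equiv.subtypeEquivRight fun _ ↦ Iff.rfl, ?_⟩
  rintro ⟨x, hx⟩ ⟨y, hy⟩
  exact ⟨fun h ↦ h.2.2, fun h ↦ ⟨hx, hy, h⟩⟩

theorem BreakAt.finCauset_breakAt {m n : ℕ} (hD : D.BreakAt m) (hmn : m < n) {C : FinCauset n}
    (hC : D ∈ stemSet C) : C.BreakAt m := by
  obtain ⟨A, ⟨-, hAdown⟩, f, hf⟩ := hC
  have hIio : Iio m ⊆ A := by
    obtain ⟨c, hcA, hmc⟩ : ∃ c ∈ A, m ≤ c := by
      by_contra! h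
      have : n ≤ m := calc
        n = A.ncard := by
          rw [← Nat.card_coe_set_eq, ← Nat.card_congr f]
          exact ((Nat.card_coe_set_eq (Iio n)).trans (ncard_Iio_nat n)).symm
        _ ≤ (Iio m).ncard := ncard_le_ncard h (finite_Iio m)
        _ = m := ncard_Iio_nat m
      omega
    exact fun a ha ↦ hAdown a c hcA (hD a ha c hmc)
  have hsep : ∀ x y, (f x : ℕ) < m → m ≤ f y → C.rel x y :=
    fun x y hx hy ↦ (hf x y).2 (hD _ hx _ hy)
  set Q : Set ℕ := {x | ∃ h : x < n, (f ⟨x, h⟩ : ℕ) < m}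
  have hQlower : IsLowerSet Q := by
    rintro x y hyx ⟨hxn, hfx⟩
    refine ⟨hyx.trans_lt hxn, not_le.1 fun hfy ↦ ?_⟩
    exact absurd (C.lt_of_rel x y (hsep ⟨x, hxn⟩ ⟨y, _⟩ hfx hfy)) (not_lt.2 hyx)
  have hQcard : Q.ncard = m := by
    rw [← Nat.card_coe_set_eq, ← ncard_Iio_nat m, ← Nat.card_coe_set_eq]
    exact Nat.card_congr <| (Equiv.subtypeSubtypeEquivSubtypeExists _ _).symm.trans <|
      (Equiv.subtypeEquiv f fun _ ↦ Iff.rfl).trans (Equiv.subtypeSubtypeEquivSubtype (hIio ·))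
  have hQ : Q = Iio m := hQcard ▸ Nat.eq_Iio_ncard_of_isLowerSet hQlower
    ((finite_Iio n).subset fun x hx ↦ hx.1)
  intro a b ha hmb hbn
  obtain ⟨han, hfa⟩ : a ∈ Q := hQ ▸ ha
  refine hsep ⟨a, han⟩ ⟨b, hbn⟩ hfa (not_lt.1 fun hfb ↦ ?_)
  exact absurd (show b ∈ Iio m from hQ ▸ ⟨hbn, hfb⟩) (not_lt.2 hmb)

theorem breakAt_iff_forall_mem_stemSet {m : ℕ} :
    D.BreakAt m ↔ ∀ n, m < n → ∀ C : FinCauset n, D ∈ stemSet C → C.BreakAt m := by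
  refine ⟨fun hD n hmn C hC ↦ hD.finCauset_breakAt hmn hC, fun h a ha b hb ↦ ?_⟩
  exact (h (b + 1) (by omega) _ (D.mem_stemSet_restrict (b + 1)) a b ha hb b.lt_succ_self).2.2

end Causet

theorem measurableSet_stemSet {n : ℕ} (hn : 0 < n) (C : FinCauset n) :
    MeasurableSet[stemAlgebra] (stemSet C) :=
  measurableSet_generateFrom ⟨n, hn, C, rfl⟩

theorem measurableSet_setOf_breakAt (m : ℕ) : MeasurableSet[stemAlgebra] {D | D.BreakAt m} := by
  have h : {D | D.BreakAt m} =
      ⋂ n, ⋂ (_ : m < n), ⋂ C : FinCauset n, ⋂ (_ : ¬ C.BreakAt m), (stemSet C)ᶜ := by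
    ext D
    simp only [Causet.breakAt_iff_forall_mem_stemSet, mem_ofPred_eq, mem_iInter, mem_compl_iff,
      not_imp_not]
  rw [h]
  exact .iInter fun n ↦ .iInter fun hmn ↦ .iInter fun C ↦ .iInter fun _ ↦
    (measurableSet_stemSet (by omega) C).compl

theorem binf_eq_iInter_iUnion : Binf = ⋂ k, ⋃ m, ⋃ (_ : k < m), {D | D.BreakAt m} := by
  ext D
  have h : {A | IsBreakPast D A} = Iio '' {m | 0 < m ∧ D.BreakAt m} := by
    ext A
    exact Causet.isBreakPast_iff
  simp only [Binf, mem_ofPred_eq, h, infinite_image_iff Iio_injective.injOn, infinite_iff_exists_gt,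
    mem_iInter, mem_iUnion]
  exact forall_congr' fun k ↦ ⟨fun ⟨m, ⟨_, hm⟩, hkm⟩ ↦ ⟨m, hkm, hm⟩,
    fun ⟨m, hkm, hm⟩ ↦ ⟨m, ⟨Nat.zero_lt_of_lt hkm, hm⟩, hkm⟩⟩

/-- The event B_∞ belongs to R(S) (and hence so does its complement). -/
theorem stmt_1 : MeasurableSet[stemAlgebra] Binf ∧ MeasurableSet[stemAlgebra] Binfᶜ := by
  have h : MeasurableSet[stemAlgebra] Binf := by
    rw [binf_eq_iInter_iUnion]
    exact .iInter fun k ↦ .iUnion fun m ↦ .iUnion fun _ ↦ measurableSet_setOf_breakAt m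
  exact ⟨h, h.compl⟩
end

section
/- R_b = 𝔐_b ∩ R: a covariant event E ∈ R satisfies (B_∞^c ⊆ E or B_∞^c ⊆ Ω \ E) if and only if E belongs to the σ-algebra 𝔐_b generated by the principal cylinder sets. -/
open MeasurableSpace MeasureTheory Set

/-!
If `E` contains all or none of the causets with finitely many breaks, then `E` or `Eᶜ` lies
in `B_∞`, and on `B_∞` the σ-algebras `𝔐` and `𝔐_b` have the same trace: a causet in `B_∞` has
arbitrarily late elements preceded by all earlier ones (every break provides one), so there
`cyl C` is the union of the principal cylinders extending `C` in which the last element is above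
all others; and `B_∞` itself belongs to `𝔐_b`, because `n` is a break exactly when each such late
element is above all of `{0, …, n - 1}`, as soon as such elements exist arbitrarily late.

Conversely, a causet whose breaks all lie in `{0, …, t}` can be relabelled, keeping `0, …, t`,
so that every later initial segment has two maximal elements: greedily list next the least
element whose past is listed and which is not above some currently maximal element (if there is
none, the listed set is the past of a break). Such a causet lies in no principal cylinder of
size above `t + 1`, so two of them agreeing on `{0, …, t}` are not separated by `𝔐_b`. By
covariance the same holds before relabelling; a causet with finitely many breaks is thus linked
to its truncation to `{0, …, t}`, which has no breaks, and that in turn to the antichain.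
-/

theorem FinCauset.ext {n : ℕ} {C D : FinCauset n} (h : C.rel = D.rel) : C = D := by
  cases C; cases D; cases h; rfl

instance (n : ℕ) : Finite (FinCauset n) := by
  let code (C : FinCauset n) : Set (Fin n × Fin n) := {p | C.rel p.1 p.2}
  have rel_of_code_eq {C D : FinCauset n} (h : code C = code D) {x y : ℕ} (hxy : C.rel x y) :
      D.rel x y := by
    obtain ⟨hx, hy⟩ := C.bounded x y hxy
    exact (Set.ext_iff.1 h (⟨x, hx⟩, ⟨y, hy⟩)).1 hxy
  refine Finite.of_injective code fun C D h => FinCauset.ext ?_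
  funext x y
  exact propext ⟨rel_of_code_eq h, rel_of_code_eq h.symm⟩

namespace Causet

def antichain : Causet where
  rel _ _ := False
  irrefl _ h := h
  trans _ _ _ h _ := h
  lt_of_rel _ _ h := h.elim

def restrict_s2 (D : Causet) (m : ℕ) : FinCauset m where
  rel x y := x < m ∧ y < m ∧ D.rel x y
  bounded _ _ h := ⟨h.1, h.2.1⟩
  irrefl x h := D.irrefl x h.2.2
  trans _ _ _ h h' := ⟨h.1, h'.2.1, D.trans _ _ _ h.2.2 h'.2.2⟩
  lt_of_rel _ _ h := D.lt_of_rel _ _ h.2.2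

theorem mem_cyl_iff_restrict_eq {D : Causet} {n : ℕ} {C : FinCauset n} :
    D ∈ cyl C ↔ D.restrict_s2 n = C := by
  constructor
  · intro h
    refine FinCauset.ext (funext₂ fun x y => propext ⟨fun hxy => (h x y hxy.1 hxy.2.1).1 hxy.2.2,
      fun hxy => ?_⟩)
    obtain ⟨hx, hy⟩ := C.bounded x y hxy
    exact ⟨hx, hy, (h x y hx hy).2 hxy⟩
  · rintro rfl x y hx hy
    exact ⟨fun h => ⟨hx, hy, h⟩, fun h => h.2.2⟩

theorem restrEq_restrict_iff {D : Causet} {n m : ℕ} {C : FinCauset n} (hnm : n ≤ m) :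
    RestrEq (D.restrict_s2 m) C ↔ D ∈ cyl C :=
  forall₄_congr fun _ _ hx hy =>
    iff_congr ⟨fun h => h.2.2, fun h => ⟨by omega, by omega, h⟩⟩ Iff.rfl

def BreakPts (D : Causet) : Set ℕ := {n | IsBreakPast D (Iio n)}

theorem _root_.IsBreakPast.exists_eq_Iio {D : Causet} {A : Set ℕ} (h : IsBreakPast D A) :
    ∃ n, A = Iio n := by
  obtain ⟨-, hAc, hrel⟩ := h
  refine ⟨sInf Aᶜ, Set.ext fun x =>
    ⟨fun hx => D.lt_of_rel _ _ (hrel x hx _ (Nat.sInf_mem hAc)), fun hx => ?_⟩⟩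
  by_contra hxA
  exact (Nat.sInf_le hxA).not_gt hx

theorem mem_Binf_iff {D : Causet} : D ∈ Binf ↔ (BreakPts D).Infinite := by
  have : {A | IsBreakPast D A} = Iio '' BreakPts D := by
    ext A
    refine ⟨fun hA => ?_, by rintro ⟨n, hn, rfl⟩; exact hn⟩
    obtain ⟨n, rfl⟩ := hA.exists_eq_Iio
    exact ⟨n, hA, rfl⟩
  rw [Binf, mem_ofPred_eq, this, infinite_image_iff Set.Iio_injective.injOn]

def IsCutUpTo (r : ℕ → ℕ → Prop) (n m : ℕ) : Prop :=
  ∀ a < n, ∀ b, n ≤ b → b ≤ m → r a b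

theorem mem_breakPts_iff {D : Causet} {n : ℕ} :
    n ∈ BreakPts D ↔ 0 < n ∧ ∀ m, IsCutUpTo D.rel n m := by
  constructor
  · rintro ⟨⟨a, ha⟩, -, hrel⟩
    exact ⟨Nat.zero_lt_of_lt ha, fun m a ha b hnb _ => hrel a ha b (not_lt.2 hnb)⟩
  · rintro ⟨hn, hcut⟩
    exact ⟨⟨0, hn⟩, ⟨n, lt_irrefl n⟩, fun a ha b hb => hcut b a ha b (not_lt.1 hb) le_rfl⟩

theorem isCutUpTo_restrict_iff {D : Causet} {n m : ℕ} :
    IsCutUpTo (D.restrict_s2 (m + 1)).rel n m ↔ IsCutUpTo D.rel n m :=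
  ⟨fun h a ha b hnb hbm => (h a ha b hnb hbm).2.2,
    fun h a ha b hnb hbm => ⟨by omega, by omega, h a ha b hnb hbm⟩⟩

end Causet

open Causet

theorem FinCauset.principal_of_isCutUpTo {k : ℕ} {C : FinCauset (k + 1)}
    (h : IsCutUpTo C.rel k k) : Principal C := by
  refine ⟨k, ⟨k.lt_succ_self, fun y hy hky => ?_⟩, fun x hx => ?_⟩
  · have := C.lt_of_rel _ _ hky
    omega
  · by_contra hxk
    exact hx.2 k k.lt_succ_self (h x (by have := hx.1; omega) k le_rfl le_rfl)

theorem measurableSet_setOf_restrict {m : ℕ} {P : FinCauset m → Prop}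
    (hP : ∀ C, P C → Principal C) :
    MeasurableSet[principalCylAlgebra] {D | P (D.restrict_s2 m)} := by
  have : {D : Causet | P (D.restrict_s2 m)} = ⋃ C ∈ {C | P C}, cyl C := by
    ext D
    simp only [mem_ofPred_eq, mem_iUnion, exists_prop, mem_cyl_iff_restrict_eq]
    exact ⟨fun h => ⟨_, h, rfl⟩, by rintro ⟨C, hC, rfl⟩; exact hC⟩
  rw [this]
  exact MeasurableSet.biUnion (to_countable _) fun C hC =>
    measurableSet_generateFrom ⟨m, C, hP C hC, rfl⟩

theorem measurableSet_isCutUpTo_inter_cyl {n k : ℕ} (C : FinCauset n) (hnk : n ≤ k + 1) :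
    MeasurableSet[principalCylAlgebra] ({D | IsCutUpTo D.rel k k} ∩ cyl C) := by
  convert measurableSet_setOf_restrict (m := k + 1)
    (P := fun C' => IsCutUpTo C'.rel k k ∧ RestrEq C' C)
    fun _ h => FinCauset.principal_of_isCutUpTo h.1 using 1
  ext D
  simp only [mem_inter_iff, mem_ofPred_eq, isCutUpTo_restrict_iff, restrEq_restrict_iff hnk]

theorem measurableSet_isCutUpTo {k : ℕ} :
    MeasurableSet[principalCylAlgebra] {D : Causet | IsCutUpTo D.rel k k} := by
  convert measurableSet_setOf_restrict (m := k + 1)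
    (P := fun C => IsCutUpTo C.rel k k) fun _ h => FinCauset.principal_of_isCutUpTo h using 1
  simp only [isCutUpTo_restrict_iff]

theorem measurableSet_isCutUpTo_and_not {n k : ℕ} :
    MeasurableSet[principalCylAlgebra]
      {D : Causet | IsCutUpTo D.rel k k ∧ ¬ IsCutUpTo D.rel n k} := by
  convert measurableSet_setOf_restrict (m := k + 1)
    (P := fun C => IsCutUpTo C.rel k k ∧ ¬ IsCutUpTo C.rel n k)
    fun _ h => FinCauset.principal_of_isCutUpTo h.1 using 1
  simp only [isCutUpTo_restrict_iff]

def breakCandidates (n : ℕ) : Set Causet :=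
  {D | IsCutUpTo D.rel n n ∧ ∀ m, IsCutUpTo D.rel m m → IsCutUpTo D.rel n m}

theorem measurableSet_breakCandidates (n : ℕ) :
    MeasurableSet[principalCylAlgebra] (breakCandidates n) := by
  have : breakCandidates n = {D | IsCutUpTo D.rel n n} ∩
      ⋂ m, {D | IsCutUpTo D.rel m m ∧ ¬ IsCutUpTo D.rel n m}ᶜ := by
    ext D
    simp only [breakCandidates, mem_inter_iff, mem_iInter, mem_compl_iff, mem_ofPred_eq, not_and,
      not_not]
  rw [this]
  exact measurableSet_isCutUpTo.inter
    (MeasurableSet.iInter fun _ => measurableSet_isCutUpTo_and_not.compl)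

/-- Arbitrarily large candidates provide arbitrarily late full pasts, and these force every
candidate `n > 0` to be a break. -/
theorem Binf_eq_iInter_iUnion_breakCandidates :
    Binf = ⋂ M, ⋃ n, ⋃ (_ : M < n), breakCandidates n := by
  ext D
  simp only [mem_iInter, mem_iUnion, exists_prop, mem_Binf_iff, infinite_iff_exists_gt]
  constructor
  · intro h M
    obtain ⟨n, hn, hMn⟩ := h M
    have hcut := (mem_breakPts_iff.1 hn).2
    exact ⟨n, hMn, hcut n, fun m _ => hcut m⟩
  · intro h M
    obtain ⟨n, hMn, hn⟩ := h M
    refine ⟨n, mem_breakPts_iff.2 ⟨by omega, fun m a ha b hnb _ => ?_⟩, hMn⟩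
    obtain ⟨k, hbk, hk, -⟩ := h b
    exact hn.2 k hk a ha b hnb hbk.le

theorem measurableSet_Binf : MeasurableSet[principalCylAlgebra] Binf := by
  rw [Binf_eq_iInter_iUnion_breakCandidates]
  exact MeasurableSet.iInter fun _ => MeasurableSet.iUnion fun n =>
    MeasurableSet.iUnion fun _ => measurableSet_breakCandidates n

theorem cyl_inter_Binf {n : ℕ} (C : FinCauset n) :
    cyl C ∩ Binf = (⋃ k, ⋃ (_ : n ≤ k), {D | IsCutUpTo D.rel k k} ∩ cyl C) ∩ Binf := by
  ext D
  simp only [mem_inter_iff, mem_iUnion, exists_prop]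
  refine ⟨fun ⟨hC, hD⟩ => ⟨?_, hD⟩, fun ⟨⟨_, _, _, hC⟩, hD⟩ => ⟨hC, hD⟩⟩
  obtain ⟨k, hk, hnk⟩ := (mem_Binf_iff.1 hD).exists_gt n
  exact ⟨k, hnk.le, (mem_breakPts_iff.1 hk).2 k, hC⟩

theorem comap_cylAlgebra_le_comap_principalCylAlgebra :
    MeasurableSpace.comap ((↑) : Binf → Causet) cylAlgebra ≤
      MeasurableSpace.comap (↑) principalCylAlgebra := by
  rw [cylAlgebra, comap_generateFrom]
  refine generateFrom_le ?_
  rintro _ ⟨_, ⟨n, -, C, rfl⟩, rfl⟩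
  refine ⟨_, MeasurableSet.iUnion fun k => MeasurableSet.iUnion fun (hnk : n ≤ k) =>
    measurableSet_isCutUpTo_inter_cyl C (Nat.le_succ_of_le hnk), ?_⟩
  rw [Subtype.preimage_coe_eq_preimage_coe_iff, inter_comm, ← cyl_inter_Binf, inter_comm]

theorem measurableSet_principalCylAlgebra_of_subset_Binf {S : Set Causet}
    (hS : MeasurableSet[cylAlgebra] S) (hSB : S ⊆ Binf) :
    MeasurableSet[principalCylAlgebra] S := by
  obtain ⟨M, hM, hMS⟩ := comap_cylAlgebra_le_comap_principalCylAlgebra _ ⟨S, hS, rfl⟩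
  rw [Subtype.preimage_coe_eq_preimage_coe_iff, inter_eq_right.2 hSB] at hMS
  exact hMS ▸ measurableSet_Binf.inter hM

namespace Causet

variable (U : Causet)

theorem exists_maximal_above {S : Finset ℕ} {x : ℕ} (hx : x ∈ S) :
    ∃ y ∈ S, (x = y ∨ U.rel x y) ∧ ∀ z ∈ S, ¬ U.rel y z := by
  classical
  set T := S.filter (fun z => x = z ∨ U.rel x z)
  have hxT : x ∈ T := Finset.mem_filter.2 ⟨hx, Or.inl rfl⟩
  obtain ⟨hyS, hxy⟩ := Finset.mem_filter.1 (T.max'_mem ⟨x, hxT⟩)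
  refine ⟨_, hyS, hxy, fun z hz hyz => ?_⟩
  have hzT : z ∈ T := Finset.mem_filter.2 ⟨hz, Or.inr <| hxy.elim (· ▸ hyz) (U.trans _ _ _ · hyz)⟩
  exact (T.le_max' z hzT).not_gt (U.lt_of_rel _ _ hyz)

theorem rel_of_forall_maximal_rel {S : Finset ℕ} {x : ℕ}
    (h : ∀ y ∈ S, (∀ z ∈ S, ¬ U.rel y z) → U.rel y x) {a : ℕ} (ha : a ∈ S) : U.rel a x := by
  obtain ⟨y, hyS, hay, hy⟩ := U.exists_maximal_above ha
  exact hay.elim (· ▸ h y hyS hy) (U.trans _ _ _ · (h y hyS hy))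

theorem exists_minimal_below_of_notMem {S : Set ℕ} {x : ℕ} (hx : x ∉ S) :
    ∃ x' ∉ S, (x' = x ∨ U.rel x' x) ∧ ∀ y, U.rel y x' → y ∈ S := by
  set T := {z | z ∉ S ∧ (z = x ∨ U.rel z x)}
  obtain ⟨hx'S, hx'x⟩ : sInf T ∈ T := Nat.sInf_mem ⟨x, hx, Or.inl rfl⟩
  refine ⟨_, hx'S, hx'x, fun y hy => ?_⟩
  by_contra hyS
  have hyT : y ∈ T := ⟨hyS, Or.inr <| hx'x.elim (· ▸ hy) (U.trans _ _ _ hy ·)⟩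
  exact (Nat.sInf_le hyT).not_gt (U.lt_of_rel _ _ hy)

def nextCandidates (S : Finset ℕ) : Set ℕ :=
  {x | x ∉ S ∧ (∀ y, U.rel y x → y ∈ S) ∧ ∃ y ∈ S, (∀ z ∈ S, ¬ U.rel y z) ∧ ¬ U.rel y x}

theorem isBreakPast_of_nextCandidates_eq_empty {S : Finset ℕ} (hS : S.Nonempty)
    (h : U.nextCandidates S = ∅) : IsBreakPast U S := by
  refine ⟨hS, S.finite_toSet.infinite_compl.nonempty, fun a ha b hb => ?_⟩
  obtain ⟨x, hxS, hxb, hx⟩ := U.exists_minimal_below_of_notMem hb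
  have hx' : x ∉ U.nextCandidates S := h ▸ Set.notMem_empty x
  simp only [nextCandidates, mem_ofPred_eq, not_and, not_exists, not_not] at hx'
  have hax := U.rel_of_forall_maximal_rel (fun y hy hmax => hx' hxS hx y hy hmax) ha
  exact hxb.elim (· ▸ hax) (U.trans _ _ _ hax ·)

variable {U} {t : ℕ}

theorem nextCandidates_nonempty (hU : ∀ n ∈ BreakPts U, n ≤ t) {S : Finset ℕ}
    (hS : Finset.range (t + 1) ⊆ S) : (U.nextCandidates S).Nonempty := by
  rw [nonempty_iff_ne_empty]
  intro h
  have hbreak := U.isBreakPast_of_nextCandidates_eq_empty ⟨t, hS (by simp)⟩ h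
  obtain ⟨n, hn⟩ := hbreak.exists_eq_Iio
  have htn : t ∈ (S : Set ℕ) := hS (Finset.self_mem_range_succ t)
  rw [hn] at hbreak htn
  exact (hU n hbreak).not_gt htn

variable (U t)

noncomputable def next (S : Finset ℕ) : ℕ := sInf (U.nextCandidates S)

noncomputable def stage : ℕ → Finset ℕ
  | 0 => Finset.range (t + 1)
  | k + 1 => insert (U.next (stage k)) (stage k)

noncomputable def relabel (i : ℕ) : ℕ :=
  if i ≤ t then i else U.next (U.stage t (i - (t + 1)))

theorem relabel_of_le {i : ℕ} (hi : i ≤ t) : U.relabel t i = i := if_pos hi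

theorem relabel_add (k : ℕ) : U.relabel t (t + 1 + k) = U.next (U.stage t k) := by
  rw [relabel, if_neg (by omega), Nat.add_sub_cancel_left]

theorem stage_mono : Monotone (U.stage t) :=
  monotone_nat_of_le_succ fun _ => Finset.subset_insert _ _

theorem range_subset_stage (k : ℕ) : Finset.range (t + 1) ⊆ U.stage t k :=
  U.stage_mono t (Nat.zero_le k)

theorem stage_eq_image_relabel (k : ℕ) :
    U.stage t k = (Finset.range (t + 1 + k)).image (U.relabel t) := by
  induction k with
  | zero =>
    refine (Finset.image_congr fun i hi => ?_).trans Finset.image_id |>.symm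
    exact U.relabel_of_le t (Nat.lt_succ_iff.1 (Finset.mem_range.1 hi))
  | succ k ih =>
    rw [← add_assoc, Finset.range_add_one, Finset.image_insert, ← ih, relabel_add]
    rfl

variable {U t}

theorem next_mem_nextCandidates (hU : ∀ n ∈ BreakPts U, n ≤ t) (k : ℕ) :
    U.next (U.stage t k) ∈ U.nextCandidates (U.stage t k) :=
  Nat.sInf_mem (nextCandidates_nonempty hU (U.range_subset_stage t k))

theorem card_stage (hU : ∀ n ∈ BreakPts U, n ≤ t) (k : ℕ) : (U.stage t k).card = t + 1 + k := by
  induction k with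
  | zero => simp [stage]
  | succ k ih =>
    rw [stage, Finset.card_insert_of_notMem (next_mem_nextCandidates hU k).1, ih, add_assoc]

theorem stage_downClosed (hU : ∀ n ∈ BreakPts U, n ≤ t) (k : ℕ) :
    ∀ y ∈ U.stage t k, ∀ z, U.rel z y → z ∈ U.stage t k := by
  induction k with
  | zero =>
    intro y hy z hzy
    exact Finset.mem_range.2 ((U.lt_of_rel _ _ hzy).trans (Finset.mem_range.1 hy))
  | succ k ih =>
    intro y hy z hzy
    rcases Finset.mem_insert.1 hy with rfl | hy
    · exact Finset.mem_insert_of_mem ((next_mem_nextCandidates hU k).2.1 z hzy)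
    · exact Finset.mem_insert_of_mem (ih y hy z hzy)

theorem relabel_injective (hU : ∀ n ∈ BreakPts U, n ≤ t) : Function.Injective (U.relabel t) := by
  intro i j hij
  have hinj : Set.InjOn (U.relabel t) (Finset.range (t + 1 + (i + j))) := by
    rw [← Finset.card_image_iff, ← stage_eq_image_relabel, card_stage hU, Finset.card_range]
  exact hinj (Finset.mem_range.2 (by omega)) (Finset.mem_range.2 (by omega)) hij

/-- If `y` never entered the enumeration although its past has, then once the enumeration is
longer than `y` some maximal element is not below `y`, so `y` would be an admissible pick smaller
than the one made. -/
theorem exists_mem_stage_of_range_subset (hU : ∀ n ∈ BreakPts U, n ≤ t) {y k₀ : ℕ}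
    (hk₀ : Finset.range y ⊆ U.stage t k₀) : ∃ k, y ∈ U.stage t k := by
  by_contra! hy
  set k := k₀ + y
  have hpast : ∀ z, U.rel z y → z ∈ U.stage t k := fun z hzy =>
    U.stage_mono t (Nat.le_add_right k₀ y) (hk₀ (Finset.mem_range.2 (U.lt_of_rel _ _ hzy)))
  by_cases hcand : ∃ y' ∈ U.stage t k, (∀ z ∈ U.stage t k, ¬ U.rel y' z) ∧ ¬ U.rel y' y
  · have hle : U.next (U.stage t k) ≤ y := Nat.sInf_le ⟨hy k, hpast, hcand⟩
    have hne : U.next (U.stage t k) ≠ y := fun h =>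
      hy (k + 1) (h ▸ Finset.mem_insert_self _ _)
    exact (next_mem_nextCandidates hU k).1 (U.stage_mono t (Nat.le_add_right k₀ y)
      (hk₀ (Finset.mem_range.2 (lt_of_le_of_ne hle hne))))
  · push Not at hcand
    have hsub : U.stage t k ⊆ Finset.range y := fun a ha =>
      Finset.mem_range.2 (U.lt_of_rel _ _ (U.rel_of_forall_maximal_rel hcand ha))
    have := Finset.card_le_card hsub
    rw [card_stage hU, Finset.card_range] at this
    omega

theorem exists_range_subset_stage (hU : ∀ n ∈ BreakPts U, n ≤ t) (y : ℕ) :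
    ∃ k, Finset.range y ⊆ U.stage t k := by
  induction y with
  | zero => exact ⟨0, by simp⟩
  | succ y ih =>
    obtain ⟨k₀, hk₀⟩ := ih
    obtain ⟨k, hk⟩ := exists_mem_stage_of_range_subset hU hk₀
    refine ⟨max k₀ k, ?_⟩
    rw [Finset.range_add_one, Finset.insert_subset_iff]
    exact ⟨U.stage_mono t (le_max_right k₀ k) hk, hk₀.trans (U.stage_mono t (le_max_left k₀ k))⟩

theorem relabel_surjective (hU : ∀ n ∈ BreakPts U, n ≤ t) : Function.Surjective (U.relabel t) := by
  intro y
  obtain ⟨k, hk⟩ := exists_range_subset_stage hU (y + 1)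
  have hy := hk (Finset.self_mem_range_succ y)
  rw [stage_eq_image_relabel] at hy
  obtain ⟨i, -, hi⟩ := Finset.mem_image.1 hy
  exact ⟨i, hi⟩

theorem lt_of_rel_relabel (hU : ∀ n ∈ BreakPts U, n ≤ t) {i j : ℕ}
    (h : U.rel (U.relabel t i) (U.relabel t j)) : i < j := by
  have hpast : U.relabel t i ∈ (Finset.range j).image (U.relabel t) := by
    by_cases hj : j ≤ t
    · have hij := U.lt_of_rel _ _ h
      rw [U.relabel_of_le t hj] at hij
      exact Finset.mem_image.2 ⟨_, Finset.mem_range.2 hij, U.relabel_of_le t (by omega)⟩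
    · obtain ⟨k, rfl⟩ : ∃ k, j = t + 1 + k := ⟨j - (t + 1), by omega⟩
      rw [← stage_eq_image_relabel]
      refine (next_mem_nextCandidates hU k).2.1 _ ?_
      rwa [relabel_add] at h
  obtain ⟨i', hi', hi'i⟩ := Finset.mem_image.1 hpast
  exact relabel_injective hU hi'i ▸ Finset.mem_range.1 hi'

/-- The newest element and a maximal element it is not above are both maximal. -/
theorem exists_two_maximal_stage_succ (hU : ∀ n ∈ BreakPts U, n ≤ t) (k : ℕ) :
    ∃ u ∈ U.stage t (k + 1), ∃ v ∈ U.stage t (k + 1), u ≠ v ∧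
      (∀ z ∈ U.stage t (k + 1), ¬ U.rel u z) ∧ ∀ z ∈ U.stage t (k + 1), ¬ U.rel v z := by
  obtain ⟨hnew, -, y, hyS, hymax, hy⟩ := next_mem_nextCandidates hU k
  refine ⟨_, Finset.mem_insert_self _ _, y, Finset.mem_insert_of_mem hyS,
    fun h => hnew (h ▸ hyS), fun z hz hrel => ?_, fun z hz hrel => ?_⟩
  · rcases Finset.mem_insert.1 hz with rfl | hz
    · exact U.irrefl _ hrel
    · exact hnew (stage_downClosed hU k z hz _ hrel)
  · rcases Finset.mem_insert.1 hz with rfl | hz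
    · exact hy hrel
    · exact hymax z hz hrel

end Causet

theorem Iso.symm {C D : Causet} (h : Iso C D) : Iso D C := by
  obtain ⟨f, hf⟩ := h
  exact ⟨f.symm, fun x y => by rw [hf, f.apply_symm_apply, f.apply_symm_apply]⟩

theorem CovariantEvent.mem_iff {E : Set Causet} (hE : CovariantEvent E) {C D : Causet}
    (h : Iso C D) : C ∈ E ↔ D ∈ E :=
  ⟨hE C D h, hE D C h.symm⟩

def FinCauset.toCauset {m : ℕ} (C : FinCauset m) : Causet :=
  ⟨C.rel, C.irrefl, C.trans, C.lt_of_rel⟩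

namespace Causet

def HasTwoMaximal (D : Causet) (n : ℕ) : Prop :=
  ∃ x y, x ≠ y ∧ RMaximal D n x ∧ RMaximal D n y

def relabelBy (U : Causet) (e : ℕ ≃ ℕ) (he : ∀ i j, U.rel (e i) (e j) → i < j) : Causet where
  rel i j := U.rel (e i) (e j)
  irrefl i := U.irrefl (e i)
  trans i j k := U.trans (e i) (e j) (e k)
  lt_of_rel := he

theorem iso_relabelBy (U : Causet) (e : ℕ ≃ ℕ) (he : ∀ i j, U.rel (e i) (e j) → i < j) :
    Iso (U.relabelBy e he) U :=
  ⟨e, fun _ _ => Iff.rfl⟩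

theorem exists_iso_hasTwoMaximal {U : Causet} {t : ℕ} (hU : ∀ n ∈ BreakPts U, n ≤ t) :
    ∃ V, Iso V U ∧ (∀ x y, x ≤ t → y ≤ t → (V.rel x y ↔ U.rel x y)) ∧
      ∀ n, t < n → HasTwoMaximal V n := by
  let e := Equiv.ofBijective _ ⟨relabel_injective hU, relabel_surjective hU⟩
  refine ⟨U.relabelBy e fun _ _ => lt_of_rel_relabel hU, iso_relabelBy _ _ _,
    fun x y hx hy => by
      change U.rel (U.relabel t x) (U.relabel t y) ↔ _
      rw [relabel_of_le _ _ hx, relabel_of_le _ _ hy],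
    fun n htn => ?_⟩
  obtain ⟨k, rfl⟩ : ∃ k, n = t + 1 + k := ⟨n - (t + 1), by omega⟩
  have hstage : U.stage t (k + 1) = (Finset.range (t + 1 + k + 1)).image (U.relabel t) :=
    stage_eq_image_relabel U t (k + 1)
  obtain ⟨u, hu, v, hv, huv, humax, hvmax⟩ := exists_two_maximal_stage_succ hU k
  rw [hstage] at hu hv humax hvmax
  obtain ⟨x, hx, rfl⟩ := Finset.mem_image.1 hu
  obtain ⟨y, hy, rfl⟩ := Finset.mem_image.1 hv
  simp only [Finset.mem_range, Finset.mem_image, forall_exists_index, and_imp,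
    forall_apply_eq_imp_iff₂] at hx hy humax hvmax
  exact ⟨x, y, fun h => huv (h ▸ rfl), ⟨by omega, fun z hz => humax z (by omega)⟩,
    ⟨by omega, fun z hz => hvmax z (by omega)⟩⟩

theorem notMem_cyl_of_hasTwoMaximal {D : Causet} {n : ℕ} {C : FinCauset (n + 1)}
    (hC : Principal C) (hD : HasTwoMaximal D n) : D ∉ cyl C := by
  intro hDC
  have hmax : ∀ x, RMaximal D n x → FMaximalBelow C (n + 1) x := fun x ⟨hxn, hx⟩ =>
    ⟨Nat.lt_succ_of_le hxn, fun y hy hxy => hx y (Nat.le_of_lt_succ hy)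
      ((hDC x y (Nat.lt_succ_of_le hxn) hy).2 hxy)⟩
  obtain ⟨x, y, hxy, hx, hy⟩ := hD
  exact hxy (hC.unique (hmax x hx) (hmax y hy))

theorem mem_iff_of_forall_principal_cyl {X Y : Causet}
    (h : ∀ n (C : FinCauset n), Principal C → (X ∈ cyl C ↔ Y ∈ cyl C)) {E : Set Causet}
    (hE : MeasurableSet[principalCylAlgebra] E) : X ∈ E ↔ Y ∈ E := by
  induction E, hE using MeasurableSpace.generateFrom_induction with
  | hC _ hC _ =>
    obtain ⟨n, C, hC, rfl⟩ := hC
    exact h n C hC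
  | empty => exact Iff.rfl
  | compl _ _ ih => exact not_congr ih
  | iUnion _ _ ih => simp only [mem_iUnion, ih]

theorem mem_iff_of_agree_of_hasTwoMaximal {X Y : Causet} {t : ℕ}
    (hXY : ∀ x y, x ≤ t → y ≤ t → (X.rel x y ↔ Y.rel x y))
    (hX : ∀ n, t < n → HasTwoMaximal X n) (hY : ∀ n, t < n → HasTwoMaximal Y n) {E : Set Causet}
    (hE : MeasurableSet[principalCylAlgebra] E) : X ∈ E ↔ Y ∈ E := by
  refine mem_iff_of_forall_principal_cyl (fun m C hC => ?_) hE
  obtain ⟨n, rfl⟩ : ∃ n, m = n + 1 := by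
    obtain ⟨x, ⟨hx, -⟩, -⟩ := hC
    exact ⟨m - 1, by omega⟩
  by_cases hnt : n ≤ t
  · exact forall₄_congr fun x y hx hy => by rw [hXY x y (by omega) (by omega)]
  · exact iff_of_false (notMem_cyl_of_hasTwoMaximal hC (hX n (by omega)))
      (notMem_cyl_of_hasTwoMaximal hC (hY n (by omega)))

theorem mem_iff_of_agree {E : Set Causet} (hcov : CovariantEvent E)
    (hE : MeasurableSet[principalCylAlgebra] E) {X Y : Causet} {t : ℕ}
    (hX : ∀ n ∈ BreakPts X, n ≤ t) (hY : ∀ n ∈ BreakPts Y, n ≤ t)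
    (hXY : ∀ x y, x ≤ t → y ≤ t → (X.rel x y ↔ Y.rel x y)) : X ∈ E ↔ Y ∈ E := by
  obtain ⟨V, hVX, hV, hV2⟩ := exists_iso_hasTwoMaximal hX
  obtain ⟨W, hWY, hW, hW2⟩ := exists_iso_hasTwoMaximal hY
  rw [← hcov.mem_iff hVX, ← hcov.mem_iff hWY]
  refine mem_iff_of_agree_of_hasTwoMaximal (fun x y hx hy => ?_) hV2 hW2 hE
  rw [hV x y hx hy, hW x y hx hy, hXY x y hx hy]

theorem breakPts_antichain : BreakPts antichain = ∅ :=
  eq_empty_of_forall_notMem fun n hn => by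
    obtain ⟨hn, hcut⟩ := mem_breakPts_iff.1 hn
    exact hcut n 0 hn n le_rfl le_rfl

theorem _root_.FinCauset.breakPts_toCauset {m : ℕ} (C : FinCauset m) :
    BreakPts C.toCauset = ∅ :=
  eq_empty_of_forall_notMem fun n hn => by
    obtain ⟨hn, hcut⟩ := mem_breakPts_iff.1 hn
    have := C.bounded _ _ (hcut (n + m) 0 hn (n + m) (by omega) le_rfl)
    omega

theorem mem_iff_antichain_mem_of_notMem_Binf {E : Set Causet} (hcov : CovariantEvent E)
    (hE : MeasurableSet[principalCylAlgebra] E) {U : Causet} (hU : U ∉ Binf) :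
    U ∈ E ↔ antichain ∈ E := by
  obtain ⟨t, ht⟩ := (not_infinite.1 (mt mem_Binf_iff.2 hU)).bddAbove
  calc U ∈ E ↔ (U.restrict_s2 (t + 1)).toCauset ∈ E :=
        mem_iff_of_agree hcov hE (fun n hn => ht hn) (by simp [FinCauset.breakPts_toCauset])
          fun x y hx hy => ⟨fun h => ⟨by omega, by omega, h⟩, fun h => h.2.2⟩
    _ ↔ antichain ∈ E :=
        mem_iff_of_agree hcov hE (t := 0) (by simp [FinCauset.breakPts_toCauset])
          (by simp [breakPts_antichain]) fun x y hx hy => by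
            obtain rfl : x = 0 := by omega
            obtain rfl : y = 0 := by omega
            exact iff_of_false (Causet.irrefl _ 0) (Causet.irrefl _ 0)

end Causet

/-- R_b = 𝔐_b ∩ R. -/
theorem stmt_2 (E : Set Causet) (hE : MemR E) :
    (Binfᶜ ⊆ E ∨ Binfᶜ ⊆ Eᶜ) ↔ MeasurableSet[principalCylAlgebra] E := by
  obtain ⟨hEmeas, hcov⟩ := hE
  constructor
  · rintro (h | h)
    · exact (measurableSet_principalCylAlgebra_of_subset_Binf hEmeas.compl
        (compl_subset_comm.1 h)).of_compl
    · exact measurableSet_principalCylAlgebra_of_subset_Binf hEmeas (compl_subset_compl.1 h)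
  · intro hE
    by_cases ha : antichain ∈ E
    · exact Or.inl fun U hU => (mem_iff_antichain_mem_of_notMem_Binf hcov hE hU).2 ha
    · exact Or.inr fun U hU hUE => ha ((mem_iff_antichain_mem_of_notMem_Binf hcov hE hU).1 hUE)
end

section
/- For every principal finite causet C_n, the set Γ_{C_n} is an atom of the σ-algebra 𝔐_b generated by the principal cylinder sets: every E ∈ 𝔐_b contains either all of Γ_{C_n} or none of it (equivalently, no event in 𝔐_b separates two elements of Γ_{C_n}). -/
open MeasurableSpace MeasureTheory Set

/-! A set `G` that is not split by any generator of a σ-algebra is not split by any of its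
members, since the sets not splitting `G` form a σ-algebra. So it suffices to check that
`Γ_C` is not split by a principal cylinder `cyl D` with `D` on `m` elements. If `m ≤ n`,
then `cyl C` already lies inside `cyl D` or misses it. If `m > n`, a causet in both
`cyl C` and `cyl D` has `D` as a principal extension of `C`, so `cyl D` misses `Γ_C`. -/

theorem subset_or_disjoint_of_measurableSet_generateFrom {α : Type*} {s : Set (Set α)}
    {G : Set α} (hs : ∀ t ∈ s, G ⊆ t ∨ Disjoint G t) {E : Set α}
    (hE : MeasurableSet[generateFrom s] E) : G ⊆ E ∨ Disjoint G E := by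
  induction E, hE using generateFrom_induction with
  | hC t ht => exact hs t ht
  | empty => exact .inr (disjoint_empty G)
  | compl t _ ih =>
    rcases ih with h | h
    · exact .inr (disjoint_compl_right.mono_right (compl_subset_compl.mpr h))
    · exact .inl h.subset_compl_right
  | iUnion f _ ih =>
    by_cases hsub : ∃ i, G ⊆ f i
    · obtain ⟨i, hi⟩ := hsub
      exact .inl (hi.trans (subset_iUnion f i))
    · exact .inr (disjoint_iUnion_right.mpr fun i => (ih i).resolve_left fun h => hsub ⟨i, h⟩)

section Cylinders

variable {m n : ℕ} {C : FinCauset n} {D : FinCauset m}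

theorem restrEq_of_mem_cyl_of_mem_cyl (hmn : m ≤ n) {X : Causet} (hXC : X ∈ cyl C)
    (hXD : X ∈ cyl D) : RestrEq C D := fun x y hx hy =>
  (hXC x y (hx.trans_le hmn) (hy.trans_le hmn)).symm.trans (hXD x y hx hy)

theorem cyl_subset_cyl (hmn : m ≤ n) (hCD : RestrEq C D) : cyl C ⊆ cyl D :=
  fun _ hX x y hx hy => (hX x y (hx.trans_le hmn) (hy.trans_le hmn)).trans (hCD x y hx hy)

theorem cyl_subset_or_disjoint_cyl (hmn : m ≤ n) : cyl C ⊆ cyl D ∨ Disjoint (cyl C) (cyl D) := by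
  by_cases hCD : RestrEq C D
  · exact .inl (cyl_subset_cyl hmn hCD)
  · exact .inr (disjoint_left.mpr fun _ hXC hXD =>
      hCD (restrEq_of_mem_cyl_of_mem_cyl hmn hXC hXD))

theorem disjoint_gamma_cyl_of_lt (hnm : n < m) (hD : Principal D) :
    Disjoint (Gamma C) (cyl D) :=
  disjoint_left.mpr fun _ hX hXD =>
    hX.2 ⟨m, hnm, D, hD, restrEq_of_mem_cyl_of_mem_cyl hnm.le hXD hX.1, hXD⟩

theorem gamma_subset_or_disjoint_cyl (hD : Principal D) :
    Gamma C ⊆ cyl D ∨ Disjoint (Gamma C) (cyl D) := by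
  rcases le_or_gt m n with hmn | hnm
  · exact (cyl_subset_or_disjoint_cyl hmn).imp sdiff_subset.trans
      (Disjoint.mono_left sdiff_subset)
  · exact .inr (disjoint_gamma_cyl_of_lt hnm hD)

end Cylinders

theorem stmt_6_general (n : ℕ) (C : FinCauset n)
    (E : Set Causet) (hE : MeasurableSet[principalCylAlgebra] E) :
    Gamma C ⊆ E ∨ Disjoint (Gamma C) E := by
  refine subset_or_disjoint_of_measurableSet_generateFrom ?_ hE
  rintro _ ⟨m, D, hD, rfl⟩
  exact gamma_subset_or_disjoint_cyl hD

/-- Each Γ_{C_n} is an atom of 𝔐_b: every E ∈ 𝔐_b contains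
all of Γ_{C_n} or none of it. -/
theorem stmt_6 (n : ℕ) (C : FinCauset n) (hC : Principal C)
    (E : Set Causet) (hE : MeasurableSet[principalCylAlgebra] E) :
    Gamma C ⊆ E ∨ Disjoint (Gamma C) E :=
  stmt_6_general n C E hE
end

section
/- Let X be a set with an equivalence relation ∼, let (X, 𝒜) be a standard Borel space, and let T := {E ∈ 𝒜 : a ∈ E and b ∼ a imply b ∈ E} be the sub-σ-algebra of ∼-invariant measurable sets. If F ⊆ T is a countable family of sets such that for any a, b ∈ X with a ≁ b there exists a set in F containing a but not b, then F generates T, i.e. the σ-algebra generated by F equals T. -/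
/-!
Sets in `generateFrom F` are invariant since invariant sets form a σ-algebra. Conversely, the map
`x ↦ (s ↦ x ∈ s)` into the countably separated space `F → Prop` is `generateFrom F`-measurable and,
by the separation hypothesis, its fibres are the `∼`-classes. An invariant Borel set `E` and its
complement therefore have disjoint analytic images, and a Borel set separating them (Lusin) pulls
back to `E`: this is Blackwell's theorem.
-/

open MeasureTheory

theorem Measurable.exists_measurableSet_preimage_eq {X Z : Type*} [MeasurableSpace X]
    [StandardBorelSpace X] [MeasurableSpace Z] [MeasurableSpace.CountablySeparated Z]
    {f : X → Z} (hf : Measurable f) {E : Set X} (hE : MeasurableSet E)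
    (hsat : ∀ a b, f a = f b → a ∈ E → b ∈ E) :
    ∃ u, MeasurableSet u ∧ f ⁻¹' u = E := by
  obtain ⟨τ, _, _, _⟩ := exists_opensMeasurableSpace_of_countablySeparated Z
  have hdisj : Disjoint (f '' E) (f '' Eᶜ) := by
    rw [Set.disjoint_left]
    rintro _ ⟨a, ha, rfl⟩ ⟨b, hb, hba⟩
    exact hb (hsat a b hba.symm ha)
  obtain ⟨u, hEu, hEcu, hu⟩ :=
    (hE.analyticSet_image hf).measurablySeparable (hE.compl.analyticSet_image hf) hdisj
  refine ⟨u, hu, subset_antisymm (fun x hx => ?_) (Set.image_subset_iff.1 hEu)⟩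
  by_contra hxE
  exact Set.disjoint_left.1 hEcu ⟨x, hxE, rfl⟩ hx

theorem measurable_fun_mem_generateFrom {X : Type*} (F : Set (Set X)) :
    Measurable[MeasurableSpace.generateFrom F] fun x (s : F) => x ∈ (s : Set X) :=
  @measurable_pi_lambda _ _ _ (MeasurableSpace.generateFrom F) _ _ fun s =>
    (@measurable_mem _ _ (MeasurableSpace.generateFrom F)).2
      (MeasurableSpace.measurableSet_generateFrom s.2)

theorem measurableSet_generateFrom_of_saturated {X : Type*} [MeasurableSpace X]
    [StandardBorelSpace X] {F : Set (Set X)} (hFc : F.Countable)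
    (hFm : ∀ s ∈ F, MeasurableSet s) {E : Set X} (hE : MeasurableSet E)
    (hsat : ∀ a b, (∀ s ∈ F, a ∈ s ↔ b ∈ s) → a ∈ E → b ∈ E) :
    MeasurableSet[MeasurableSpace.generateFrom F] E := by
  have := hFc.to_subtype
  let code := fun x (s : F) => x ∈ (s : Set X)
  have hcode : Measurable code :=
    (measurable_fun_mem_generateFrom F).mono (MeasurableSpace.generateFrom_le hFm) le_rfl
  have hcode_sat : ∀ a b, code a = code b → a ∈ E → b ∈ E := fun a b hab =>
    hsat a b fun s hs => Iff.of_eq (congrFun hab ⟨s, hs⟩)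
  obtain ⟨u, hu, rfl⟩ := hcode.exists_measurableSet_preimage_eq hE hcode_sat
  exact measurable_fun_mem_generateFrom F hu

theorem invariant_of_measurableSet_generateFrom {X : Type*} {r : X → X → Prop}
    (hr : ∀ a b, r a b → r b a) {F : Set (Set X)} (hF : ∀ s ∈ F, ∀ a b, a ∈ s → r b a → b ∈ s)
    {E : Set X} (hE : MeasurableSet[MeasurableSpace.generateFrom F] E) :
    ∀ a b, a ∈ E → r b a → b ∈ E := by
  induction hE with
  | basic s hs => exact hF s hs
  | empty => simp
  | compl t _ ht => exact fun a b ha hba hb => ha (ht b a hb (hr b a hba))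
  | iUnion g _ hg =>
    simp only [Set.mem_iUnion]
    exact fun a b ⟨i, hi⟩ hba => ⟨i, hg i a b hi hba⟩

/-- On a standard Borel space X with an equivalence relation ∼,
any countable family F of ∼-invariant measurable sets that separates points
up to ∼ generates the σ-algebra T of all ∼-invariant measurable sets. -/
theorem stmt_12 {X : Type*} [MeasurableSpace X] [StandardBorelSpace X]
    (r : X → X → Prop) (hr : Equivalence r)
    (F : Set (Set X)) (hFc : F.Countable)
    (hFT : ∀ s ∈ F, MeasurableSet s ∧ ∀ a b, a ∈ s → r b a → b ∈ s)
    (hsep : ∀ a b, ¬ r a b → ∃ s ∈ F, a ∈ s ∧ b ∉ s) :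
    ∀ E : Set X, MeasurableSet[MeasurableSpace.generateFrom F] E ↔
      (MeasurableSet E ∧ ∀ a b, a ∈ E → r b a → b ∈ E) := by
  have hFm : ∀ s ∈ F, MeasurableSet s := fun s hs => (hFT s hs).1
  intro E
  refine ⟨fun hE => ⟨MeasurableSpace.generateFrom_le hFm E hE, ?_⟩, fun ⟨hE, hinv⟩ => ?_⟩
  · exact invariant_of_measurableSet_generateFrom (fun _ _ => hr.symm)
      (fun s hs => (hFT s hs).2) hE
  · refine measurableSet_generateFrom_of_saturated hFc hFm hE fun a b hab ha => ?_
    by_contra hb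
    obtain ⟨s, hs, hbs, has⟩ := hsep b a fun hba => hb (hinv a b ha hba)
    exact has ((hab s hs).2 hbs)
end

section
/- The countable family of sets Ŝ ∩ B_∞ := {stem(C) ∩ B_∞ : C a principal finite order} separates B_∞ up to order-isomorphism: for any two causets D, E ∈ B_∞ that are not order-isomorphic, there exists a set in Ŝ ∩ B_∞ containing D but not E. -/
open MeasurableSpace MeasureTheory Set

/-!
If `E` lay in every set `stemSet C ∩ B_∞` (`C` principal) containing `D`, then, since an initial
segment `{0, …, k}` of `D` ending at a break `k` is a principal stem of `D`, every finite initial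
segment of `D` would embed into `E` as a stem. A stem of size `m` of `E` lies below any break of
`E` at a position `≥ m`, so there are only finitely many such embeddings for each `m`, and Kőnig's
lemma glues compatible ones into a stem embedding of all of `D` into `E`. Its image is infinite,
so it passes every break of `E` and contains everything below it: the embedding is onto, and
`D ≅ E`.
-/

namespace Causet

def IsBreakAt (D : Causet) (k : ℕ) : Prop :=
  ∀ a b, a < k → k ≤ b → D.rel a b

lemma exists_isBreakAt_of_isBreakPast {D : Causet} {A : Set ℕ} (h : IsBreakPast D A) :
    ∃ k, D.IsBreakAt k ∧ A = Iio k := by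
  obtain ⟨-, hAc, hrel⟩ := h
  have hk : sInf Aᶜ ∈ Aᶜ := Nat.sInf_mem hAc
  have hA : A = Iio (sInf Aᶜ) := by
    refine Subset.antisymm (fun a ha => D.lt_of_rel _ _ (hrel a ha _ hk)) fun a ha => ?_
    by_contra haA
    exact (Nat.sInf_le haA).not_gt ha
  refine ⟨sInf Aᶜ, fun a b ha hb => hrel a (hA ▸ ha) b fun hbA => ?_, hA⟩
  exact (hA ▸ hbA : b ∈ Iio _).not_ge hb

lemma infinite_setOf_isBreakAt {D : Causet} (hD : D ∈ Binf) : {k | D.IsBreakAt k}.Infinite := by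
  refine fun hfin => hD ((hfin.image Iio).subset fun A hA => ?_)
  obtain ⟨k, hk, rfl⟩ := exists_isBreakAt_of_isBreakPast hA
  exact ⟨k, hk, rfl⟩

def initSeg (D : Causet) (k : ℕ) : FinCauset (k + 1) where
  rel x y := x < k + 1 ∧ y < k + 1 ∧ D.rel x y
  bounded _ _ h := ⟨h.1, h.2.1⟩
  irrefl x h := D.irrefl x h.2.2
  trans x y z h₁ h₂ := ⟨h₁.1, h₂.2.1, D.trans x y z h₁.2.2 h₂.2.2⟩
  lt_of_rel x y h := D.lt_of_rel x y h.2.2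

lemma principal_initSeg {D : Causet} {k : ℕ} (hk : D.IsBreakAt k) : Principal (D.initSeg k) := by
  refine ⟨k, ⟨k.lt_succ_self, fun y _ hky => (D.lt_of_rel k y hky.2.2).not_ge ?_⟩, ?_⟩
  · omega
  · rintro x ⟨hx, hmax⟩
    by_contra hxk
    exact hmax k k.lt_succ_self ⟨hx, k.lt_succ_self, hk x k (by omega) le_rfl⟩

lemma mem_stemSet_initSeg (D : Causet) (k : ℕ) : D ∈ stemSet (D.initSeg k) :=
  ⟨Iio (k + 1), ⟨finite_Iio _, fun x _ hy hxy => (D.lt_of_rel x _ hxy).trans hy⟩,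
    Equiv.subtypeEquivRight fun _ => mem_Iio.symm,
    fun x y => ⟨fun h => h.2.2, fun h => ⟨x.2, y.2, h⟩⟩⟩

def IsStemEmbedding (D E : Causet) {m : ℕ} (g : Fin m → ℕ) : Prop :=
  Function.Injective g ∧ (∀ x y : Fin m, D.rel x y ↔ E.rel (g x) (g y)) ∧
    ∀ x z, E.rel z (g x) → z ∈ range g

variable {D E : Causet}

lemma IsStemEmbedding.comp_castLE {m n : ℕ} {g : Fin n → ℕ} (hg : IsStemEmbedding D E g)
    (hmn : m ≤ n) : IsStemEmbedding D E (g ∘ Fin.castLE hmn) := by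
  obtain ⟨hinj, hrel, hdown⟩ := hg
  refine ⟨hinj.comp (Fin.castLE_injective hmn), fun x y => hrel (x.castLE hmn) (y.castLE hmn),
    fun x z hz => ?_⟩
  obtain ⟨y, rfl⟩ := hdown _ z hz
  have hyx : D.rel y x := (hrel y _).2 hz
  exact ⟨⟨y, (D.lt_of_rel _ _ hyx).trans x.2⟩, rfl⟩

lemma exists_isStemEmbedding_of_mem_stemSet {k : ℕ} (h : E ∈ stemSet (D.initSeg k)) :
    ∃ g : Fin (k + 1) → ℕ, IsStemEmbedding D E g := by
  obtain ⟨A, ⟨-, hdown⟩, f, hf⟩ := h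
  refine ⟨fun x => f ⟨x, x.2⟩, fun x y hxy => ?_, fun x y => ?_, fun x z hz => ?_⟩
  · simpa [Fin.ext_iff] using f.injective (Subtype.ext hxy)
  · exact ⟨fun h => (hf ⟨x, x.2⟩ ⟨y, y.2⟩).1 ⟨x.2, y.2, h⟩,
      fun h => ((hf ⟨x, x.2⟩ ⟨y, y.2⟩).2 h).2.2⟩
  · have hzA : z ∈ A := hdown z _ (f _).2 hz
    exact ⟨⟨f.symm ⟨z, hzA⟩, (f.symm ⟨z, hzA⟩).2⟩, by simp⟩

lemma IsStemEmbedding.lt_of_isBreakAt {m M : ℕ} {g : Fin m → ℕ} (hg : IsStemEmbedding D E g)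
    (hM : E.IsBreakAt M) (hmM : m ≤ M) (x : Fin m) : g x < M := by
  by_contra! hx
  have hsub : insert (g x) (Finset.range M) ⊆ Finset.univ.image g := by
    intro z hz
    obtain rfl | hz := Finset.mem_insert.1 hz
    · exact Finset.mem_image_of_mem g (Finset.mem_univ x)
    · obtain ⟨y, rfl⟩ := hg.2.2 x z (hM z (g x) (Finset.mem_range.1 hz) hx)
      exact Finset.mem_image_of_mem g (Finset.mem_univ y)
  have := (Finset.card_le_card hsub).trans Finset.card_image_le
  rw [Finset.card_insert_of_notMem (by simpa using hx), Finset.card_range, Finset.card_univ,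
    Fintype.card_fin] at this
  omega

lemma exists_forall_isStemEmbedding (hE : {k | E.IsBreakAt k}.Infinite)
    (h : ∀ m, ∃ g : Fin m → ℕ, IsStemEmbedding D E g) :
    ∃ G : ℕ → ℕ, ∀ m, IsStemEmbedding D E fun x : Fin m => G x := by
  let α (m : ℕ) := {g : Fin m → ℕ // IsStemEmbedding D E g}
  have (m : ℕ) : Nonempty (α m) := let ⟨g, hg⟩ := h m; ⟨⟨g, hg⟩⟩
  have (m : ℕ) : Finite (α m) := by
    obtain ⟨M, hM, hmM⟩ := hE.exists_gt m
    refine Finite.of_injective (β := Fin m → Fin M)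
      (fun g x => ⟨g.1 x, g.2.lt_of_isBreakAt hM hmM.le x⟩) fun g g' hgg' => ?_
    exact Subtype.ext (funext fun x => congrArg Fin.val (congrFun hgg' x))
  obtain ⟨f, hf⟩ := exists_seq_forall_proj_of_forall_finite (α := α)
    (fun hij g => ⟨g.1 ∘ Fin.castLE hij, g.2.comp_castLE hij⟩) (fun _ _ => rfl)
    (fun _ _ _ _ _ _ => rfl) fun _ _ => toFinite _
  refine ⟨fun x => (f (x + 1)).1 (Fin.last x), fun m => ?_⟩
  convert (f m).2 using 1
  funext x
  exact congrArg (fun g : α _ => g.1 (Fin.last x)) (hf (Nat.succ_le_of_lt x.2)).symm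

lemma iso_of_forall_isStemEmbedding (hE : {k | E.IsBreakAt k}.Infinite) {G : ℕ → ℕ}
    (hG : ∀ m, IsStemEmbedding D E fun x : Fin m => G x) : Iso D E := by
  have hinj : G.Injective := fun x y hxy => by
    simpa using (hG (max x y + 1)).1 (a₁ := ⟨x, by omega⟩) (a₂ := ⟨y, by omega⟩) hxy
  have hsurj : G.Surjective := by
    intro z
    obtain ⟨M, hM, hzM⟩ := hE.exists_gt z
    obtain ⟨_, ⟨y, rfl⟩, hMy⟩ := (infinite_range_of_injective hinj).exists_gt M
    obtain ⟨x, hx⟩ := (hG (y + 1)).2.2 (Fin.last y) z (hM z (G y) hzM hMy.le)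
    exact ⟨x, hx⟩
  exact ⟨.ofBijective G ⟨hinj, hsurj⟩, fun x y =>
    (hG (max x y + 1)).2.1 ⟨x, by omega⟩ ⟨y, by omega⟩⟩

end Causet

/-- The countable family Ŝ ∩ B_∞ separates B_∞ up to
order-isomorphism. -/
theorem stmt_14 (D E : Causet) (hD : D ∈ Binf) (hE : E ∈ Binf)
    (hne : ¬ Iso D E) :
    ∃ s ∈ { t : Set Causet | ∃ n, ∃ C : FinCauset n, Principal C ∧ t = stemSet C ∩ Binf },
      D ∈ s ∧ E ∉ s := by
  by_contra! h
  have hstem (k : ℕ) (hk : D.IsBreakAt k) : E ∈ stemSet (D.initSeg k) :=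
    (h _ ⟨k + 1, D.initSeg k, Causet.principal_initSeg hk, rfl⟩
      ⟨D.mem_stemSet_initSeg k, hD⟩).1
  have hemb (m : ℕ) : ∃ g : Fin m → ℕ, Causet.IsStemEmbedding D E g := by
    obtain ⟨k, hk, hmk⟩ := (Causet.infinite_setOf_isBreakAt hD).exists_gt m
    obtain ⟨g, hg⟩ := Causet.exists_isStemEmbedding_of_mem_stemSet (hstem k hk)
    exact ⟨_, hg.comp_castLE (by omega)⟩
  have hEbreaks := Causet.infinite_setOf_isBreakAt hE
  obtain ⟨G, hG⟩ := Causet.exists_forall_isStemEmbedding hEbreaks hemb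
  exact hne (Causet.iso_of_forall_isStemEmbedding hEbreaks hG)
end
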